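/- arXiv:0804.0645 — 8 statements merged into one kernel-verified Lean document; each statement's English description precedes it below -/
import Mathlib

section
/- For every odd positive integer k, the sum over j from 1 to k-1 of tan²(πj/k) equals k² − k. -/
/-!
For odd `k` the angles `π j / k`, `0 ≤ j < k`, have nonzero cosine, pairwise distinct tangents
and `sin (k · π j / k) = 0`. Hence the `t_j = tan (π j / k)` are exactly the `k` roots of
`Im ((1 + t i) ^ k) = ∑ₙ C(k, n) Im(iⁿ) tⁿ`, whose leading coefficient is `± 1`, whose
coefficient of `t ^ (k - 1)` vanishes and whose coefficient of `t ^ (k - 2)` is `∓ C(k, 2)`.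
By Vieta,
`∑ t_j = 0` and `∑_{i < j} t_i t_j = -C(k, 2)`, so `∑ t_j ^ 2 = 2 C(k, 2) = k ^ 2 - k`,
and the term `j = 0` vanishes.
-/

open Finset Real

namespace Multiset

variable {R : Type*}

theorem esymm_one [CommSemiring R] (s : Multiset R) : s.esymm 1 = s.sum := by
  simp [esymm, powersetCard_one, map_map]

theorem esymm_two_cons [CommSemiring R] (a : R) (s : Multiset R) :
    (a ::ₘ s).esymm 2 = a * s.sum + s.esymm 2 := by
  simp [esymm, powersetCard_cons, powersetCard_one, map_map, add_comm]
  rw [sum_map_mul_left, map_id']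

theorem sum_map_sq [CommRing R] (s : Multiset R) :
    (s.map (· ^ 2)).sum = s.sum ^ 2 - 2 * s.esymm 2 := by
  induction s using Multiset.induction_on with
  | empty => simp [esymm, powersetCard_zero_right 1]
  | cons a s ih =>
    rw [map_cons, sum_cons, sum_cons, esymm_two_cons, ih]
    ring

end Multiset

namespace Polynomial

theorem leadingCoeff_sq_mul_sum_roots_sq {R : Type*} [CommRing R] [IsDomain R] {p : R[X]}
    (hroots : p.roots.card = p.natDegree) (hdeg : 2 ≤ p.natDegree) :
    p.leadingCoeff ^ 2 * (p.roots.map (· ^ 2)).sum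
      = p.coeff (p.natDegree - 1) ^ 2 - 2 * p.leadingCoeff * p.coeff (p.natDegree - 2) := by
  rw [coeff_eq_esymm_roots_of_card hroots (Nat.sub_le _ 1),
    coeff_eq_esymm_roots_of_card hroots (Nat.sub_le _ 2), Nat.sub_sub_self (by omega),
    Nat.sub_sub_self hdeg, Multiset.esymm_one, Multiset.sum_map_sq]
  ring

end Polynomial

namespace Complex

theorem im_I_pow_of_even {n : ℕ} (hn : Even n) : (I ^ n).im = 0 := by
  obtain ⟨m, rfl⟩ := hn
  rw [← two_mul, pow_mul, I_sq]
  rcases neg_one_pow_eq_or ℂ m with h | h <;> simp [h]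

theorem im_I_pow_ne_zero_of_odd {n : ℕ} (hn : Odd n) : (I ^ n).im ≠ 0 := by
  obtain ⟨m, rfl⟩ := hn
  rw [pow_succ, pow_mul, I_sq]
  rcases neg_one_pow_eq_or ℂ m with h | h <;> simp [h]

theorem im_I_pow_sub_two {n : ℕ} (hn : 2 ≤ n) : (I ^ (n - 2)).im = -(I ^ n).im := by
  conv_rhs => rw [← Nat.sub_add_cancel hn, pow_add, I_sq]
  simp

end Complex

theorem cos_pi_mul_div_ne_zero {k : ℕ} (hk : Odd k) (j : ℕ) : cos (π * j / k) ≠ 0 := by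
  rw [Ne, cos_eq_zero_iff]
  rintro ⟨n, hn⟩
  have hk0 : (k : ℝ) ≠ 0 := by exact_mod_cast hk.pos.ne'
  have hreal : ((2 * j : ℤ) : ℝ) = ((2 * n + 1) * k : ℤ) := by
    field_simp at hn
    push_cast
    nlinarith [pi_pos]
  have hint : 2 * (j : ℤ) = (2 * n + 1) * k := by exact_mod_cast hreal
  have hodd : Odd ((2 * n + 1) * (k : ℤ)) := (odd_two_mul_add_one n).mul (by exact_mod_cast hk)
  exact Int.not_even_iff_odd.mpr hodd (hint ▸ even_two_mul _)

theorem sin_sub_eq_zero_of_tan_eq {x y : ℝ} (hx : cos x ≠ 0) (hy : cos y ≠ 0)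
    (h : tan x = tan y) : sin (x - y) = 0 := by
  rw [tan_eq_sin_div_cos, tan_eq_sin_div_cos, div_eq_div_iff hx hy] at h
  rw [sin_sub]
  linarith

theorem injOn_tan_pi_mul_div {k : ℕ} (hk : Odd k) :
    Set.InjOn (fun j : ℕ => tan (π * j / k)) (range k) := by
  intro i hi j hj hij
  have hk0 : (0 : ℝ) < k := by exact_mod_cast hk.pos
  have hi' : (i : ℝ) < k := by exact_mod_cast mem_range.mp hi
  have hj' : (j : ℝ) < k := by exact_mod_cast mem_range.mp hj
  have hsin :=
    sin_sub_eq_zero_of_tan_eq (cos_pi_mul_div_ne_zero hk i) (cos_pi_mul_div_ne_zero hk j) hij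
  have hdiff : π * i / k - π * j / k = 0 := by
    rw [sin_eq_zero_iff_of_lt_of_lt] at hsin
    · exact hsin
    · rw [← sub_div, lt_div_iff₀ hk0]; nlinarith [pi_pos]
    · rw [← sub_div, div_lt_iff₀ hk0]; nlinarith [pi_pos]
  simpa [sub_eq_zero, div_left_inj' hk0.ne', pi_ne_zero] using hdiff

open Polynomial

-- `Im ((1 + t i) ^ k)`: the numerator of `tan (k x)` as a rational function of `t = tan x`.
noncomputable def tanNumerator (k : ℕ) : ℝ[X] :=
  ∑ n ∈ range (k + 1), C ((k.choose n : ℝ) * (Complex.I ^ n).im) * X ^ n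

theorem coeff_tanNumerator (k n : ℕ) :
    (tanNumerator k).coeff n = k.choose n * (Complex.I ^ n).im := by
  simp only [tanNumerator, finsetSum_coeff, coeff_C_mul_X_pow, sum_ite_eq, mem_range]
  split_ifs with h
  · rfl
  · simp [Nat.choose_eq_zero_of_lt (by omega : k < n)]

theorem natDegree_tanNumerator {k : ℕ} (hk : Odd k) : (tanNumerator k).natDegree = k := by
  refine natDegree_eq_of_le_of_coeff_ne_zero ?_ ?_
  · rw [natDegree_le_iff_coeff_eq_zero]
    intro n hn
    rw [coeff_tanNumerator, Nat.choose_eq_zero_of_lt (by exact_mod_cast hn)]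
    simp
  · simpa [coeff_tanNumerator] using Complex.im_I_pow_ne_zero_of_odd hk

theorem leadingCoeff_tanNumerator {k : ℕ} (hk : Odd k) :
    (tanNumerator k).leadingCoeff = (Complex.I ^ k).im := by
  rw [leadingCoeff, natDegree_tanNumerator hk, coeff_tanNumerator, Nat.choose_self, Nat.cast_one,
    one_mul]

theorem coeff_tanNumerator_sub_one {k : ℕ} (hk : Odd k) : (tanNumerator k).coeff (k - 1) = 0 := by
  rw [coeff_tanNumerator, Complex.im_I_pow_of_even (Nat.Odd.sub_odd hk odd_one), mul_zero]

theorem coeff_tanNumerator_sub_two {k : ℕ} (hk : 2 ≤ k) :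
    (tanNumerator k).coeff (k - 2) = -(k * (k - 1) / 2 * (Complex.I ^ k).im) := by
  rw [coeff_tanNumerator, Complex.im_I_pow_sub_two hk, Nat.choose_symm hk, Nat.cast_choose_two,
    mul_neg]

theorem eval_tanNumerator (k : ℕ) (t : ℝ) :
    (tanNumerator k).eval t = ((1 + t * Complex.I) ^ k).im := by
  rw [add_comm, add_pow, Complex.im_sum, tanNumerator, eval_finsetSum]
  refine sum_congr rfl fun n _ => ?_
  rw [one_pow, mul_one, mul_pow, ← Complex.ofReal_pow, mul_right_comm, ← Complex.ofReal_natCast,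
    ← Complex.ofReal_mul, Complex.im_ofReal_mul, eval_C_mul, eval_X_pow]
  ring

theorem eval_tan_tanNumerator (k : ℕ) {x : ℝ} (hx : cos x ≠ 0) :
    (tanNumerator k).eval (tan x) = sin (k * x) / cos x ^ k := by
  have hexp : (1 + tan x * Complex.I) * cos x = Complex.exp (x * Complex.I) := by
    have hx' : Complex.cos x ≠ 0 := by exact_mod_cast hx
    rw [Complex.exp_ofReal_mul_I, tan_eq_sin_div_cos]
    push_cast
    field_simp
  rw [eval_tanNumerator, eq_div_iff (pow_ne_zero k hx), ← Complex.im_mul_ofReal,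
    Complex.ofReal_pow, ← mul_pow, hexp, ← Complex.exp_nat_mul, ← mul_assoc]
  exact_mod_cast Complex.exp_ofReal_mul_I_im (k * x)

theorem roots_tanNumerator {k : ℕ} (hk : Odd k) :
    (tanNumerator k).roots = (range k).val.map fun j : ℕ => tan (π * j / k) := by
  rw [← image_val_of_injOn (injOn_tan_pi_mul_div hk)]
  refine roots_eq_of_natDegree_le_card_of_ne_zero ?_ ?_ ?_
  · simp only [mem_image, mem_range, forall_exists_index, and_imp]
    rintro _ j - rfl
    rw [eval_tan_tanNumerator k (cos_pi_mul_div_ne_zero hk j),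
      mul_div_cancel₀ _ (by exact_mod_cast hk.pos.ne'), mul_comm, sin_nat_mul_pi, zero_div]
  · rw [natDegree_tanNumerator hk, card_image_of_injOn (injOn_tan_pi_mul_div hk), card_range]
  · exact fun h => hk.pos.ne (by simpa [h] using natDegree_tanNumerator hk)

theorem sum_tan_sq_general (k : ℕ) (hk : Odd k) :
    ∑ j ∈ Finset.Icc 1 (k - 1), Real.tan (π * j / k) ^ 2 = (k : ℝ) ^ 2 - k := by
  obtain rfl | hk3 : k = 1 ∨ 3 ≤ k := by obtain ⟨m, rfl⟩ := hk; omega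
  · simp
  have hvieta := leadingCoeff_sq_mul_sum_roots_sq (p := tanNumerator k)
    (by rw [roots_tanNumerator hk, natDegree_tanNumerator hk]; simp)
    (by rw [natDegree_tanNumerator hk]; omega)
  rw [natDegree_tanNumerator hk, leadingCoeff_tanNumerator hk, coeff_tanNumerator_sub_one hk,
    coeff_tanNumerator_sub_two (by omega), roots_tanNumerator hk, Multiset.map_map,
    Function.comp_def, sum_map_val] at hvieta
  have hsum : ∑ j ∈ range k, tan (π * j / k) ^ 2 = (k : ℝ) ^ 2 - k :=
    mul_left_cancel₀ (pow_ne_zero 2 (Complex.im_I_pow_ne_zero_of_odd hk)) (by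
      linear_combination hvieta)
  rw [Icc_sub_one_right_eq_Ico_of_not_isMin (by simpa using hk.pos.ne'), ← hsum, range_eq_Ico,
    sum_eq_sum_Ico_succ_bot hk.pos]
  simp

theorem sum_tan_sq (k : ℕ) (hk : Odd k) (hk0 : 0 < k) :
    ∑ j ∈ Finset.Icc 1 (k - 1), Real.tan (π * j / k) ^ 2 = (k : ℝ) ^ 2 - k :=
  sum_tan_sq_general k hk
end

section
/- For every integer k ≥ 2, the sum over j from 1 to k-1 of cot²(πj/k) equals (k−1)(k−2)/3. -/
/-!
For `sin θ ≠ 0` we have `cot θ ± i = e^{±iθ} / sin θ`, hence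
`(cot θ + i)^k - (cot θ - i)^k = 2i sin (kθ) / sin^k θ`. So the `k - 1` distinct numbers
`cot (πj/k)`, `1 ≤ j ≤ k - 1`, are all the roots of the degree `k - 1` polynomial
`(X + i)^k - (X - i)^k`, whose three top coefficients are `2ik`, `0` and `-2i·C(k,3)`.
Vieta's formulas give `∑ cot² = e₁² - 2e₂ = 2·C(k,3)/k = (k-1)(k-2)/3`.
-/

open Polynomial
open scoped Real

namespace Multiset

variable {R : Type*} [CommRing R]

theorem esymm_cons_succ (a : R) (s : Multiset R) (n : ℕ) :
    (a ::ₘ s).esymm (n + 1) = s.esymm (n + 1) + a * s.esymm n := by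
  simp [esymm, sum_map_mul_left]

theorem sum_map_sq_eq_esymm (s : Multiset R) :
    (s.map (· ^ 2)).sum = s.esymm 1 ^ 2 - 2 * s.esymm 2 := by
  induction s using Multiset.induction_on with
  | empty => simp [esymm, powersetCard_zero_right]
  | cons a s ih =>
    have h0 : s.esymm 0 = 1 := by simp [esymm]
    rw [esymm_cons_succ, esymm_cons_succ, h0, map_cons, sum_cons, ih]
    ring

end Multiset

theorem Polynomial.sum_sq_roots_mul_leadingCoeff_sq {R : Type*} [CommRing R] [IsDomain R]
    {p : R[X]} (hroots : Multiset.card p.roots = p.natDegree) (hp : 2 ≤ p.natDegree) :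
    (p.roots.map (· ^ 2)).sum * p.leadingCoeff ^ 2 =
      p.coeff (p.natDegree - 1) ^ 2 - 2 * p.leadingCoeff * p.coeff (p.natDegree - 2) := by
  rw [coeff_eq_esymm_roots_of_card hroots (Nat.sub_le _ _),
    coeff_eq_esymm_roots_of_card hroots (Nat.sub_le _ _), Nat.sub_sub_self (by omega),
    Nat.sub_sub_self hp, Multiset.sum_map_sq_eq_esymm]
  ring

theorem Nat.cast_choose_three {K : Type*} [Field K] [CharZero K] (a : ℕ) :
    (a.choose 3 : K) = a * (a - 1) * (a - 2) / 6 := by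
  induction a with
  | zero => simp
  | succ a ih =>
    rw [Nat.choose_succ_succ', Nat.cast_add, ih, Nat.cast_choose_two]
    push_cast
    ring

theorem Complex.cot_add_I_pow_sub_cot_sub_I_pow {z : ℂ} (hz : sin z ≠ 0) (k : ℕ) :
    (cot z + I) ^ k - (cot z - I) ^ k = 2 * I * sin (k * z) / sin z ^ k := by
  have hplus : cot z + I = exp (z * I) / sin z := by
    rw [cot_eq_cos_div_sin, exp_mul_I]
    field_simp
  have hminus : cot z - I = exp (-z * I) / sin z := by
    rw [cot_eq_cos_div_sin, exp_mul_I, cos_neg, sin_neg]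
    field_simp
    ring
  have hsin : exp (k * z * I) - exp (-(k * z) * I) = 2 * I * sin (k * z) := by
    linear_combination (-I) * two_sin (k * z) + (exp (k * z * I) - exp (-(k * z) * I)) * I_sq
  rw [hplus, hminus, div_pow, div_pow, ← sub_div, ← exp_nat_mul, ← exp_nat_mul, ← hsin]
  ring_nf

theorem Real.injOn_cot : Set.InjOn cot (Set.Ioo 0 π) := by
  intro x hx y hy hxy
  have hsx := (sin_pos_of_pos_of_lt_pi hx.1 hx.2).ne'
  have hsy := (sin_pos_of_pos_of_lt_pi hy.1 hy.2).ne'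
  rw [cot_eq_cos_div_sin, cot_eq_cos_div_sin, div_eq_div_iff hsx hsy] at hxy
  have hsub : sin (y - x) = 0 := by
    rw [sin_sub]
    linarith
  rw [sin_eq_zero_iff_of_lt_of_lt (by linarith [hx.2, hy.1]) (by linarith [hx.1, hy.2])] at hsub
  linarith

open Complex Finset

theorem pi_mul_div_mem_Ioo {k j : ℕ} (hj : j ∈ Icc 1 (k - 1)) : π * j / k ∈ Set.Ioo 0 π := by
  obtain ⟨hj1, hjk⟩ := mem_Icc.mp hj
  have hj0 : (0 : ℝ) < j := by exact_mod_cast hj1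
  have hjk : (j : ℝ) < k := by exact_mod_cast (by omega : j < k)
  constructor
  · exact div_pos (mul_pos Real.pi_pos hj0) (hj0.trans hjk)
  · rw [div_lt_iff₀ (hj0.trans hjk)]
    exact mul_lt_mul_of_pos_left hjk Real.pi_pos

theorem injOn_cot_pi_mul_div (k : ℕ) :
    Set.InjOn (fun j : ℕ => (Real.cot (π * j / k) : ℂ)) (Icc 1 (k - 1)) := by
  intro i hi j hj hij
  have h := Real.injOn_cot (pi_mul_div_mem_Ioo hi) (pi_mul_div_mem_Ioo hj) (ofReal_injective hij)
  have hk : (k : ℝ) ≠ 0 := by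
    have := (mem_Icc.mp hi).1.trans (mem_Icc.mp hi).2
    exact_mod_cast (by omega : k ≠ 0)
  rw [div_left_inj' hk, mul_right_inj' Real.pi_ne_zero] at h
  exact_mod_cast h

noncomputable def cotPoly (k : ℕ) : ℂ[X] := (X + C I) ^ k - (X - C I) ^ k

section cotPoly

variable {k : ℕ}

theorem coeff_cotPoly (k m : ℕ) :
    (cotPoly k).coeff m = (I ^ (k - m) - (-I) ^ (k - m)) * k.choose m := by
  rw [cotPoly, sub_eq_add_neg X, ← C_neg, coeff_sub, coeff_X_add_C_pow, coeff_X_add_C_pow]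
  ring

theorem coeff_cotPoly_sub_one (hk : 1 ≤ k) : (cotPoly k).coeff (k - 1) = 2 * I * k := by
  rw [coeff_cotPoly, Nat.sub_sub_self hk, Nat.choose_symm hk, Nat.choose_one_right]
  ring

theorem coeff_cotPoly_sub_one_ne_zero (hk : 1 ≤ k) : (cotPoly k).coeff (k - 1) ≠ 0 := by
  have : (k : ℂ) ≠ 0 := by exact_mod_cast (by omega : k ≠ 0)
  simp [coeff_cotPoly_sub_one hk, this]

theorem coeff_cotPoly_sub_two (hk : 2 ≤ k) : (cotPoly k).coeff (k - 2) = 0 := by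
  simp [coeff_cotPoly, Nat.sub_sub_self hk]

theorem coeff_cotPoly_sub_three (hk : 3 ≤ k) :
    (cotPoly k).coeff (k - 3) = -2 * I * k.choose 3 := by
  rw [coeff_cotPoly, Nat.sub_sub_self hk, Nat.choose_symm hk]
  linear_combination (2 * I * k.choose 3) * I_sq

theorem natDegree_cotPoly_le (k : ℕ) : (cotPoly k).natDegree ≤ k - 1 := by
  refine natDegree_le_iff_coeff_eq_zero.mpr fun m hm => ?_
  rcases (show k ≤ m by omega).eq_or_lt with rfl | hkm
  · simp [coeff_cotPoly]
  · simp [coeff_cotPoly, Nat.choose_eq_zero_of_lt hkm]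

theorem natDegree_cotPoly (hk : 1 ≤ k) : (cotPoly k).natDegree = k - 1 :=
  natDegree_eq_of_le_of_coeff_ne_zero (natDegree_cotPoly_le k) (coeff_cotPoly_sub_one_ne_zero hk)

theorem isRoot_cotPoly {x : ℝ} (hx : Real.sin x ≠ 0) (hkx : Real.sin (k * x) = 0) :
    (cotPoly k).IsRoot (Real.cot x) := by
  have hx' : sin x ≠ 0 := by exact_mod_cast hx
  have hkx' : sin (k * x) = 0 := by exact_mod_cast hkx
  simp [cotPoly, IsRoot, ofReal_cot, cot_add_I_pow_sub_cot_sub_I_pow hx', hkx']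

theorem roots_cotPoly (hk : 1 ≤ k) :
    (cotPoly k).roots = ((Icc 1 (k - 1)).image fun j : ℕ => (Real.cot (π * j / k) : ℂ)).val := by
  refine roots_eq_of_natDegree_le_card_of_ne_zero ?_ ?_ ?_
  · simp only [mem_image]
    rintro _ ⟨j, hj, rfl⟩
    obtain ⟨hpos, hlt⟩ := pi_mul_div_mem_Ioo hj
    refine isRoot_cotPoly (Real.sin_pos_of_pos_of_lt_pi hpos hlt).ne' ?_
    have hk : (k : ℝ) ≠ 0 := by exact_mod_cast (by omega : k ≠ 0)
    rw [mul_div_cancel₀ _ hk, mul_comm, Real.sin_nat_mul_pi]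
  · rw [card_image_of_injOn (injOn_cot_pi_mul_div k), Nat.card_Icc]
    exact (natDegree_cotPoly_le k).trans (by omega)
  · exact fun h => coeff_cotPoly_sub_one_ne_zero hk (by rw [h, coeff_zero])

theorem sum_sq_roots_cotPoly (hk : 3 ≤ k) :
    ((cotPoly k).roots.map (· ^ 2)).sum = ((k : ℂ) - 1) * (k - 2) / 3 := by
  have hdeg := natDegree_cotPoly (by omega : 1 ≤ k)
  have hcard : Multiset.card (cotPoly k).roots = (cotPoly k).natDegree := by
    rw [roots_cotPoly (by omega), hdeg, card_val, card_image_of_injOn (injOn_cot_pi_mul_div k),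
      Nat.card_Icc]
    omega
  have h := sum_sq_roots_mul_leadingCoeff_sq hcard (by omega)
  rw [leadingCoeff, hdeg, Nat.sub_sub, Nat.sub_sub, coeff_cotPoly_sub_one (by omega),
    coeff_cotPoly_sub_two (by omega), coeff_cotPoly_sub_three hk, Nat.cast_choose_three] at h
  set S := ((cotPoly k).roots.map (· ^ 2)).sum
  have hk0 : (k : ℂ) ≠ 0 := by exact_mod_cast (by omega : k ≠ 0)
  refine mul_left_cancel₀ (pow_ne_zero 2 hk0) ?_
  linear_combination (-1 / 4) * h + (k ^ 2 * S - k ^ 2 * ((k - 1) * (k - 2) / 3)) * I_sq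

end cotPoly

open Finset Real

theorem sum_cot_sq (k : ℕ) (hk : 2 ≤ k) :
    ∑ j ∈ Finset.Icc 1 (k - 1),
      (Real.cos (π * j / k) / Real.sin (π * j / k)) ^ 2 =
    ((k : ℝ) - 1) * ((k : ℝ) - 2) / 3 := by
  simp_rw [← Real.cot_eq_cos_div_sin]
  obtain rfl | hk3 := hk.eq_or_lt
  · norm_num [Real.cot_eq_cos_div_sin]
  have h := sum_sq_roots_cotPoly hk3
  rw [roots_cotPoly (by omega), sum_map_val, sum_image (injOn_cot_pi_mul_div k)] at h
  exact_mod_cast h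
end

section
/- For every odd positive integer k ≥ 3, the sum over j from 1 to k-1 of csc²(2πj/k) equals (k² − 1)/3. -/
open Finset Real

/-!
With `z = exp (2iθ)` one has `csc² θ = -4 z / (z - 1)²`. For odd `k`, `η = exp (4πi / k)` is a
primitive `k`-th root of unity, so the sum becomes `-4 ∑_{j=1}^{k-1} η^j / (η^j - 1)²`.
At a nontrivial `k`-th root of unity `z`, `(z - 1)⁻¹ = S(z) / k` with `S(z) = ∑_{i<k} i z^i`, so each
term is `z S(z)² / k²` at `z = η^j`. Summed over all `k`-th roots of unity, the monomials
`i i' z^(i + i' + 1)` of `z S(z)²` survive only when `i + i' + 1 = k`, giving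
`k ∑_{i<k} i (k - 1 - i) = k² (k - 1)(k - 2) / 6`; removing the term `S(1)² = k² (k - 1)² / 4`
of `z = 1` leaves `k² (1 - k²) / 12`.
-/

section WeightedGeomSum

variable {R : Type*} [CommRing R]

def weightedGeomSum (n : ℕ) (z : R) : R := ∑ i ∈ range n, (i : R) * z ^ i

theorem sub_one_mul_weightedGeomSum (n : ℕ) (z : R) :
    (z - 1) * weightedGeomSum n z = n * z ^ n - z * ∑ i ∈ range n, z ^ i := by
  induction n with
  | zero => simp [weightedGeomSum]
  | succ n ih =>
    simp only [weightedGeomSum] at ih ⊢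
    rw [sum_range_succ, sum_range_succ, mul_add, ih]
    push_cast
    ring

theorem sub_one_mul_weightedGeomSum_of_pow_eq_one [IsDomain R] {n : ℕ} {z : R}
    (hz : z ^ n = 1) (hz1 : z ≠ 1) : (z - 1) * weightedGeomSum n z = n := by
  have hgeom : ∑ i ∈ range n, z ^ i = 0 := by
    have := mul_geom_sum z n
    rw [hz, sub_self] at this
    exact (mul_eq_zero.mp this).resolve_left (sub_ne_zero.mpr hz1)
  rw [sub_one_mul_weightedGeomSum, hz, hgeom]
  ring

theorem two_mul_weightedGeomSum_one (n : ℕ) :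
    2 * weightedGeomSum n (1 : R) = n * (n - 1) := by
  induction n with
  | zero => simp [weightedGeomSum]
  | succ n ih =>
    simp only [weightedGeomSum, one_pow, mul_one] at ih ⊢
    rw [sum_range_succ, mul_add, ih]
    push_cast
    ring

theorem six_mul_sum_range_mul_sub (c : R) (n : ℕ) :
    6 * ∑ i ∈ range n, (i : R) * (c - i) = 3 * c * n * (n - 1) - n * (n - 1) * (2 * n - 1) := by
  induction n with
  | zero => simp
  | succ n ih =>
    rw [sum_range_succ, mul_add, ih]
    push_cast
    ring

end WeightedGeomSum

namespace IsPrimitiveRoot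

variable {R : Type*} [CommRing R] [IsDomain R] {η : R} {k : ℕ}

theorem sum_range_pow_pow (hη : IsPrimitiveRoot η k) (m : ℕ) :
    ∑ j ∈ range k, (η ^ m) ^ j = if k ∣ m then (k : R) else 0 := by
  split_ifs with hdvd
  · simp [(hη.pow_eq_one_iff_dvd m).mpr hdvd]
  · have hm : η ^ m ≠ 1 := mt (hη.pow_eq_one_iff_dvd m).mp hdvd
    have := mul_geom_sum (η ^ m) k
    rw [pow_right_comm, hη.pow_eq_one, one_pow, sub_self] at this
    exact (mul_eq_zero.mp this).resolve_left (sub_ne_zero.mpr hm)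

theorem sum_range_pow_mul_weightedGeomSum_sq (hη : IsPrimitiveRoot η k) :
    ∑ j ∈ range k, η ^ j * weightedGeomSum k (η ^ j) ^ 2
      = k * ∑ i ∈ range k, (i : R) * ((k : R) - 1 - i) := by
  have hexpand : ∀ j, η ^ j * weightedGeomSum k (η ^ j) ^ 2
      = ∑ i ∈ range k, ∑ i' ∈ range k, (i : R) * i' * (η ^ (i + i' + 1)) ^ j := by
    intro j
    rw [weightedGeomSum, sq, sum_mul_sum, mul_sum]
    refine sum_congr rfl fun i _ => ?_
    rw [mul_sum]
    refine sum_congr rfl fun i' _ => ?_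
    ring
  have hdiag : ∀ i ∈ range k, ∀ i' ∈ range k, k ∣ i + i' + 1 ↔ i' = k - 1 - i := by
    intro i hi i' hi'
    rw [mem_range] at hi hi'
    constructor
    · rintro ⟨c, hc⟩
      obtain _ | _ | c := c <;> [omega; omega; nlinarith]
    · intro h
      exact ⟨1, by omega⟩
  calc ∑ j ∈ range k, η ^ j * weightedGeomSum k (η ^ j) ^ 2
      = ∑ i ∈ range k, ∑ i' ∈ range k, (i : R) * i' * ∑ j ∈ range k, (η ^ (i + i' + 1)) ^ j := by
        simp_rw [hexpand, mul_sum]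
        rw [sum_comm]
        exact sum_congr rfl fun i _ => sum_comm
    _ = ∑ i ∈ range k, (i : R) * ((k : R) - 1 - i) * k := by
        refine sum_congr rfl fun i hi => ?_
        have hik : i < k := mem_range.mp hi
        have hterm : ∀ i' ∈ range k, (i : R) * i' * ∑ j ∈ range k, (η ^ (i + i' + 1)) ^ j
            = if i' = k - 1 - i then (i : R) * i' * k else 0 := fun i' hi' => by
          rw [hη.sum_range_pow_pow, mul_ite, mul_zero]
          exact if_congr (hdiag i hi i' hi') rfl rfl
        rw [sum_congr rfl hterm, sum_ite_eq', if_pos (mem_range.mpr (by omega)),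
          Nat.cast_sub (by omega), Nat.cast_sub (by omega), Nat.cast_one]
    _ = k * ∑ i ∈ range k, (i : R) * ((k : R) - 1 - i) := by
        rw [mul_sum]
        exact sum_congr rfl fun i _ => by ring

end IsPrimitiveRoot

theorem IsPrimitiveRoot.sum_Icc_pow_div_pow_sub_one_sq {K : Type*} [Field K] [CharZero K]
    {η : K} {k : ℕ} (hη : IsPrimitiveRoot η k) (hk : k ≠ 0) :
    ∑ j ∈ Icc 1 (k - 1), η ^ j / (η ^ j - 1) ^ 2 = (1 - (k : K) ^ 2) / 12 := by
  have hkK : (k : K) ≠ 0 := Nat.cast_ne_zero.mpr hk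
  have hterm : ∀ j ∈ Icc 1 (k - 1),
      η ^ j / (η ^ j - 1) ^ 2 = η ^ j * weightedGeomSum k (η ^ j) ^ 2 / k ^ 2 := by
    intro j hj
    rw [mem_Icc] at hj
    have hne : η ^ j - 1 ≠ 0 := sub_ne_zero.mpr (hη.pow_ne_one_of_pos_of_lt (by omega) (by omega))
    have hmul := sub_one_mul_weightedGeomSum_of_pow_eq_one
      (by rw [pow_right_comm, hη.pow_eq_one, one_pow]) (sub_ne_zero.mp hne)
    field_simp
    rw [← hmul]
    ring
  have hsplit : range k = insert 0 (Icc 1 (k - 1)) := by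
    ext j; simp only [mem_range, mem_insert, mem_Icc]; omega
  have hfull := hη.sum_range_pow_mul_weightedGeomSum_sq
  rw [hsplit, sum_insert (by simp), pow_zero, one_mul] at hfull
  rw [sum_congr rfl hterm, ← sum_div, eq_sub_of_add_eq' hfull]
  have h6 := six_mul_sum_range_mul_sub ((k : K) - 1) k
  rw [hsplit] at h6
  have h2 := two_mul_weightedGeomSum_one (R := K) k
  field_simp
  linear_combination (↑k * 2 * h6 - 3 * (k * (k - 1) + 2 * weightedGeomSum k 1) * h2)

theorem Complex.inv_sin_sq (z : ℂ) :
    (sin z ^ 2)⁻¹ = -4 * exp (2 * z * I) / (exp (2 * z * I) - 1) ^ 2 := by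
  have hsin : sin z ^ 2 = -(exp (2 * z * I) - 1) ^ 2 / (4 * exp (2 * z * I)) := by
    have hexp : exp (2 * z * I) = exp (z * I) ^ 2 := by rw [← Complex.exp_nat_mul]; ring_nf
    rw [hexp, Complex.sin, neg_mul, Complex.exp_neg]
    field_simp
    ring_nf
    rw [Complex.I_sq]
    ring
  rw [hsin, neg_div, inv_neg, inv_div]
  ring

theorem sum_csc_sq_general (k : ℕ) (hk : Odd k) :
    ∑ j ∈ Finset.Icc 1 (k - 1), (1 / Real.sin (2 * π * j / k)) ^ 2 =
    ((k : ℝ) ^ 2 - 1) / 3 := by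
  have hk0 : k ≠ 0 := by rintro rfl; simp at hk
  set η := Complex.exp (2 * π * Complex.I * (2 / k))
  have hη : IsPrimitiveRoot η k :=
    Complex.isPrimitiveRoot_exp_of_coprime 2 k hk0 (Nat.coprime_two_left.mpr hk)
  have hterm : ∀ j : ℕ, (((1 / Real.sin (2 * π * j / k)) ^ 2 : ℝ) : ℂ)
      = -4 * (η ^ j / (η ^ j - 1) ^ 2) := by
    intro j
    have hpow : η ^ j = Complex.exp (2 * (2 * π * j / k) * Complex.I) := by
      rw [← Complex.exp_nat_mul]; ring_nf
    push_cast
    rw [one_div, inv_pow, Complex.inv_sin_sq, hpow]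
    ring
  apply Complex.ofReal_injective
  rw [Complex.ofReal_sum, sum_congr rfl fun j _ => hterm j, ← mul_sum,
    hη.sum_Icc_pow_div_pow_sub_one_sq hk0]
  push_cast
  ring

theorem sum_csc_sq (k : ℕ) (hk : Odd k) (hk3 : 3 ≤ k) :
    ∑ j ∈ Finset.Icc 1 (k - 1), (1 / Real.sin (2 * π * j / k)) ^ 2 =
    ((k : ℝ) ^ 2 - 1) / 3 :=
  sum_csc_sq_general k hk
end

section
/- For every odd positive integer k ≥ 3, the sum over j from 1 to k-1 of sec²(2πj/k) equals k² − 1. -/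
/-!
With `ω = exp (2iθ)` one has `(1 + ω)² = 4 ω cos² θ`, so `sec² θ = ω · (2 / (1 + ω))²`. When `ω` is
a `k`-th root of unity and `k` is odd, `(-ω)ᵏ = -1` and the geometric series gives
`2 / (1 + ω) = ∑_{m < k} (-ω)ᵐ`; hence `sec² θ = P(ω)` for the polynomial
`P(x) = x (∑_{m < k} (-x)ᵐ)² = ∑_{m, n < k} (-1)^(m + n) x^(m + n + 1)`. Summing `P` over all
`k`-th roots of unity keeps only the exponents divisible by `k`, i.e. `m + n + 1 = k`, which gives
`∑_{j < k} sec² (2πj/k) = k²`; the term `j = 0` contributes `1`.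
-/

open Finset Real

lemma Real.cos_two_pi_mul_div_ne_zero_of_odd {k : ℕ} (hk : Odd k) (j : ℕ) :
    cos (2 * π * j / k) ≠ 0 := by
  have hk0 : (k : ℝ) ≠ 0 := by exact_mod_cast hk.pos.ne'
  rw [Ne, Real.cos_eq_zero_iff]
  rintro ⟨n, hn⟩
  have hreal : (4 * j : ℝ) = (2 * n + 1) * k := by
    field_simp at hn
    linear_combination hn
  have hint : (4 * j : ℤ) = (2 * n + 1) * k := by exact_mod_cast hreal
  have hodd : Odd (4 * j : ℤ) := hint ▸ (odd_two_mul_add_one n).mul (by exact_mod_cast hk)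
  exact Int.not_even_iff_odd.mpr hodd ⟨2 * j, by ring⟩

lemma Complex.one_add_exp_two_mul_I_sq (θ : ℂ) :
    (1 + exp (2 * θ * I)) ^ 2 = 4 * exp (2 * θ * I) * cos θ ^ 2 := by
  have hθ : exp (θ * I) * exp (-θ * I) = 1 := by rw [← exp_add]; simp
  have h2θ : exp (2 * θ * I) = exp (θ * I) ^ 2 := by rw [← exp_nat_mul]; ring_nf
  calc (1 + exp (2 * θ * I)) ^ 2
      = (exp (θ * I) * exp (θ * I) + exp (θ * I) * exp (-θ * I)) ^ 2 := by rw [hθ, h2θ]; ring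
    _ = (exp (θ * I) * (2 * cos θ)) ^ 2 := by rw [two_cos]; ring
    _ = 4 * exp (2 * θ * I) * cos θ ^ 2 := by rw [h2θ]; ring

lemma Complex.inv_cos_sq_eq {θ a : ℂ} (hθ : cos θ ≠ 0) (ha : a * (1 + exp (2 * θ * I)) = 2) :
    (1 / cos θ) ^ 2 = exp (2 * θ * I) * a ^ 2 := by
  have key : 4 * (exp (2 * θ * I) * a ^ 2 * cos θ ^ 2) = 4 := by
    calc 4 * (exp (2 * θ * I) * a ^ 2 * cos θ ^ 2)
        = a ^ 2 * (4 * exp (2 * θ * I) * cos θ ^ 2) := by ring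
      _ = (a * (1 + exp (2 * θ * I))) ^ 2 := by rw [← one_add_exp_two_mul_I_sq]; ring
      _ = 4 := by rw [ha]; norm_num
  field_simp
  linear_combination -key / 4

lemma alternating_geom_sum_mul_one_add {R : Type*} [CommRing R] {k : ℕ} (hk : Odd k) {x : R}
    (hx : x ^ k = 1) : (∑ m ∈ range k, (-x) ^ m) * (1 + x) = 2 := by
  have h := geom_sum_mul (-x) k
  rw [hk.neg_pow, hx] at h
  linear_combination -h

lemma IsPrimitiveRoot.sum_range_pow_pow_s3 {R : Type*} [CommRing R] [IsDomain R] {ζ : R} {k : ℕ}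
    (hζ : IsPrimitiveRoot ζ k) (r : ℕ) :
    ∑ j ∈ range k, (ζ ^ j) ^ r = if k ∣ r then (k : R) else 0 := by
  simp_rw [← pow_mul, mul_comm _ r, pow_mul]
  split_ifs with hr
  · simp [(hζ.pow_eq_one_iff_dvd r).mpr hr]
  · have hne : ζ ^ r - 1 ≠ 0 := sub_ne_zero.mpr fun h ↦ hr ((hζ.pow_eq_one_iff_dvd r).mp h)
    have h := geom_sum_mul (ζ ^ r) k
    rw [pow_right_comm, hζ.pow_eq_one, one_pow, sub_self] at h
    exact (mul_eq_zero.mp h).resolve_right hne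

lemma IsPrimitiveRoot.sum_range_pow_mul_alternating_geom_sum_sq {R : Type*} [CommRing R]
    [IsDomain R] {ζ : R} {k : ℕ} (hζ : IsPrimitiveRoot ζ k) (hk : Odd k) :
    ∑ j ∈ range k, ζ ^ j * (∑ m ∈ range k, (-ζ ^ j) ^ m) ^ 2 = (k : R) ^ 2 := by
  have hexpand : ∀ x : R, x * (∑ m ∈ range k, (-x) ^ m) ^ 2 =
      ∑ m ∈ range k, ∑ n ∈ range k, (-1) ^ (m + n) * x ^ (m + n + 1) := by
    intro x
    rw [sq, sum_mul_sum, mul_sum]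
    refine sum_congr rfl fun m _ ↦ mul_sum _ _ _ |>.trans (sum_congr rfl fun n _ ↦ ?_)
    rw [neg_pow, neg_pow]
    ring
  have hdvd {m n : ℕ} (hm : m < k) (hn : n < k) : k ∣ m + n + 1 ↔ n = k - 1 - m := by
    constructor
    · intro h
      have := Nat.eq_of_dvd_of_lt_two_mul (by omega) h (by omega)
      omega
    · rintro rfl
      exact ⟨1, by omega⟩
  have hsign : (-1 : R) ^ (k - 1) = 1 := (Nat.Odd.sub_odd hk odd_one).neg_one_pow
  calc ∑ j ∈ range k, ζ ^ j * (∑ m ∈ range k, (-ζ ^ j) ^ m) ^ 2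
      = ∑ m ∈ range k, ∑ n ∈ range k, (-1) ^ (m + n) * ∑ j ∈ range k, (ζ ^ j) ^ (m + n + 1) := by
        simp_rw [hexpand, mul_sum]
        rw [sum_comm]
        exact sum_congr rfl fun _ _ ↦ sum_comm
    _ = ∑ m ∈ range k, (k : R) := by
        refine sum_congr rfl fun m hm ↦ ?_
        rw [mem_range] at hm
        simp_rw [hζ.sum_range_pow_pow_s3, mul_ite, mul_zero]
        rw [sum_eq_single_of_mem (k - 1 - m) (mem_range.mpr (by omega))]
        · rw [if_pos ((hdvd hm (by omega)).mpr rfl), show m + (k - 1 - m) = k - 1 by omega,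
            hsign, one_mul]
        · intro n hn hne
          rw [if_neg (mt (hdvd hm (mem_range.mp hn)).mp hne)]
    _ = (k : R) ^ 2 := by simp [sq]

lemma sum_range_sec_sq_of_odd {k : ℕ} (hk : Odd k) :
    ∑ j ∈ range k, (1 / cos (2 * π * j / k)) ^ 2 = (k : ℝ) ^ 2 := by
  set ζ : ℂ := Complex.exp (2 * π * Complex.I * (2 / k)) with hζ_def
  have hζ : IsPrimitiveRoot ζ k :=
    Complex.isPrimitiveRoot_exp_of_coprime 2 k hk.pos.ne' (Nat.coprime_two_left.mpr hk)
  have hterm (j : ℕ) : (((1 / cos (2 * π * j / k)) ^ 2 : ℝ) : ℂ) =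
      ζ ^ j * (∑ m ∈ range k, (-ζ ^ j) ^ m) ^ 2 := by
    set θ : ℝ := 2 * π * j / k with hθ
    have hω : ζ ^ j = Complex.exp (2 * θ * Complex.I) := by
      rw [hζ_def, ← Complex.exp_nat_mul, hθ]
      push_cast
      ring_nf
    have hcos : Complex.cos θ ≠ 0 := by
      exact_mod_cast Real.cos_two_pi_mul_div_ne_zero_of_odd hk j
    have hroot : (ζ ^ j) ^ k = 1 := by rw [pow_right_comm, hζ.pow_eq_one, one_pow]
    rw [Complex.ofReal_pow, Complex.ofReal_div, Complex.ofReal_one, Complex.ofReal_cos]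
    rw [hω] at hroot ⊢
    exact Complex.inv_cos_sq_eq hcos (alternating_geom_sum_mul_one_add hk hroot)
  have hsum := hζ.sum_range_pow_mul_alternating_geom_sum_sq hk
  simp_rw [← hterm] at hsum
  exact_mod_cast hsum

theorem sum_sec_sq_general (k : ℕ) (hk : Odd k) :
    ∑ j ∈ Finset.Icc 1 (k - 1), (1 / Real.cos (2 * π * j / k)) ^ 2 =
    (k : ℝ) ^ 2 - 1 := by
  have hIcc : Icc 1 (k - 1) = Ico 1 k := by ext; simp only [mem_Icc, mem_Ico]; omega
  have hsplit := sum_range_sec_sq_of_odd hk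
  rw [range_eq_Ico, sum_eq_sum_Ico_succ_bot hk.pos] at hsplit
  simp only [Nat.cast_zero, mul_zero, zero_div, cos_zero, div_one, one_pow] at hsplit
  rw [hIcc]
  linarith

theorem sum_sec_sq (k : ℕ) (hk : Odd k) (hk3 : 3 ≤ k) :
    ∑ j ∈ Finset.Icc 1 (k - 1), (1 / Real.cos (2 * π * j / k)) ^ 2 =
    (k : ℝ) ^ 2 - 1 :=
  sum_sec_sq_general k hk
end

section
/- For integers a, k with 0 < a < k, the sum over j from 1 to k-1 of cot(πj/k)·sin(2πaj/k) equals k − 2a. -/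
open Finset Real

/-!
Summing the Dirichlet kernel, `sin θ · (1 + 2 ∑_{m=1}^{a} cos 2mθ) = sin (2a+1)θ`, turns
`cot θ · sin 2aθ` into `1 + 2 ∑_{m=1}^{a} cos 2mθ - cos 2aθ`. At `θ = πj/k`, summed over
`1 ≤ j ≤ k - 1`, each `cos (2πmj/k)` with `0 < m < k` contributes `-1` (the nontrivial `k`-th roots
of unity sum to `-1`, again by the Dirichlet kernel identity, now at `θ = πm/k`), leaving
`(k - 1) - 2a + 1`.
-/

theorem sin_mul_one_add_two_mul_sum_cos (θ : ℝ) (n : ℕ) :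
    sin θ * (1 + 2 * ∑ m ∈ Icc 1 n, cos (2 * m * θ)) = sin ((2 * n + 1) * θ) := by
  induction n with
  | zero => simp
  | succ n ih =>
    have hstep : sin ((2 * (n + 1 : ℕ) + 1) * θ) - sin ((2 * n + 1) * θ)
        = 2 * sin θ * cos (2 * (n + 1 : ℕ) * θ) := by
      rw [sin_sub_sin]; push_cast; ring_nf
    rw [sum_Icc_succ_top (by omega)]
    linear_combination ih - hstep

theorem cos_div_sin_mul_sin_two_mul {θ : ℝ} (hθ : sin θ ≠ 0) (n : ℕ) :
    cos θ / sin θ * sin (2 * n * θ)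
      = 1 + 2 * ∑ m ∈ Icc 1 n, cos (2 * m * θ) - cos (2 * n * θ) := by
  have hsin : sin ((2 * n + 1) * θ) = sin (2 * n * θ) * cos θ + cos (2 * n * θ) * sin θ := by
    rw [add_mul, one_mul, sin_add]
  rw [div_mul_eq_mul_div, div_eq_iff hθ]
  linear_combination -(sin_mul_one_add_two_mul_sum_cos θ n) - hsin

theorem sin_pi_mul_div_ne_zero {m k : ℕ} (hm : 0 < m) (hmk : m < k) : sin (π * m / k) ≠ 0 := by
  have hk : (0 : ℝ) < k := by exact_mod_cast hm.trans hmk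
  refine (sin_pos_of_pos_of_lt_pi (by positivity) ?_).ne'
  rw [div_lt_iff₀ hk]
  exact mul_lt_mul_of_pos_left (by exact_mod_cast hmk) pi_pos

theorem sum_Icc_cos_two_pi_mul_div {m k : ℕ} (hm : 0 < m) (hmk : m < k) :
    ∑ j ∈ Icc 1 (k - 1), cos (2 * π * m * j / k) = -1 := by
  set θ := π * m / k
  have hθ : sin θ ≠ 0 := sin_pi_mul_div_ne_zero hm hmk
  have hend : sin ((2 * (k - 1 : ℕ) + 1) * θ) = -sin θ := by
    have hk : (k : ℝ) ≠ 0 := by exact_mod_cast (hm.trans hmk).ne'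
    rw [Nat.cast_sub (by omega), ← sin_nat_mul_two_pi_sub θ m]
    congr 1
    simp only [θ]
    field_simp
    ring
  have harg : ∀ j : ℝ, 2 * π * m * j / k = 2 * j * θ := fun j => by simp only [θ]; ring
  have h := sin_mul_one_add_two_mul_sum_cos θ (k - 1)
  rw [hend] at h
  simp only [harg]
  apply mul_left_cancel₀ hθ
  linear_combination h / 2

theorem sum_cot_sin (a k : ℕ) (ha : 0 < a) (hak : a < k) :
    ∑ j ∈ Finset.Icc 1 (k - 1),
      (Real.cos (π * j / k) / Real.sin (π * j / k)) * Real.sin (2 * π * a * j / k) =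
    (k : ℝ) - 2 * a := by
  calc _ = ∑ j ∈ Icc 1 (k - 1), (1 + 2 * ∑ m ∈ Icc 1 a, cos (2 * π * m * j / k)
          - cos (2 * π * a * j / k)) := by
        refine sum_congr rfl fun j hj => ?_
        have hj := mem_Icc.mp hj
        have harg : ∀ x : ℝ, 2 * π * x * j / k = 2 * x * (π * j / k) := fun x => by ring
        simp only [harg]
        exact cos_div_sin_mul_sin_two_mul (sin_pi_mul_div_ne_zero (by omega) (by omega)) a
    _ = (k - 1 : ℕ) + 2 * ∑ m ∈ Icc 1 a, ∑ j ∈ Icc 1 (k - 1), cos (2 * π * m * j / k)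
          - ∑ j ∈ Icc 1 (k - 1), cos (2 * π * a * j / k) := by
        rw [sum_sub_distrib, sum_add_distrib, ← mul_sum, sum_comm]
        simp
    _ = (k : ℝ) - 2 * a := by
        have hsum : ∀ m ∈ Icc 1 a, ∑ j ∈ Icc 1 (k - 1), cos (2 * π * m * j / k) = -1 :=
          fun m hm => sum_Icc_cos_two_pi_mul_div (mem_Icc.mp hm).1 ((mem_Icc.mp hm).2.trans_lt hak)
        rw [sum_congr rfl hsum, sum_Icc_cos_two_pi_mul_div ha hak]
        simp only [sum_const, Nat.card_Icc, add_tsub_cancel_right, nsmul_eq_mul,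
          Nat.cast_sub (by omega : 1 ≤ k), Nat.cast_one]
        ring
end

section
/- For every odd positive integer k, the sum over j from 0 to k-1 of tan⁴(πj/k) equals k(k−1)(k² + k − 3)/3. -/
/-!
With `ζ = exp (2πi/k)`, the number `i · tan (πj/k)` is the Cayley transform
`(ζ^j - 1)/(ζ^j + 1)` of the root of unity `ζ^j`. Factoring `a^k - b^k` over the `k`-th roots of
unity shows that for odd `k` these transforms are exactly the roots of
`((X + 1)^k + (X - 1)^k)/2`, so their elementary symmetric functions are `e_i = C(k, i)` for even
`i` and `0` for odd `i`. Newton's identities then give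
`∑ tan⁴ = ∑ (i tan)⁴ = 2 e₂² - 4 e₄ = 2 C(k, 2)² - 4 C(k, 4)`.
-/

open Finset Real Polynomial

theorem IsPrimitiveRoot.pow_sub_pow_eq_prod_range_sub_mul {R : Type*} [CommRing R] [IsDomain R]
    {ζ : R} {n : ℕ} (hζ : IsPrimitiveRoot ζ n) (hn : 0 < n) (x y : R) :
    x ^ n - y ^ n = ∏ i ∈ range n, (x - ζ ^ i * y) := by
  simpa [eval_prod] using congrArg (eval x) (X_pow_sub_C_eq_prod hζ hn (rfl : y ^ n = y ^ n))

theorem Finset.sum_pow_eq_mul_esymm_sub_sum {ι R : Type*} [CommRing R] (s : Finset ι)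
    (f : ι → R) (n : ℕ) (hn : 0 < n) :
    ∑ i ∈ s, f i ^ n = (-1) ^ (n + 1) * n * (s.val.map f).esymm n -
      ∑ a ∈ antidiagonal n with a.1 ∈ Set.Ioo 0 n,
        (-1) ^ a.1 * (s.val.map f).esymm a.1 * ∑ i ∈ s, f i ^ a.2 := by
  have hval : (univ.val.map fun i : s => f i) = s.val.map f := by
    rw [univ_eq_attach, attach_val]
    exact Multiset.attach_map_val' _ _
  have hsum (m : ℕ) : ∑ i : s, f i ^ m = ∑ i ∈ s, f i ^ m := sum_coe_sort s (f · ^ m)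
  simpa only [map_sub, map_mul, map_pow, map_sum, map_neg, map_one, map_natCast,
    MvPolynomial.aeval_esymm_eq_multiset_esymm, MvPolynomial.psum, MvPolynomial.aeval_X, hval,
    hsum] using congrArg (MvPolynomial.aeval fun i : s => f i)
      (MvPolynomial.psum_eq_mul_esymm_sub_sum s R n hn)

theorem Finset.sum_pow_four_of_esymm_one_eq_zero_of_esymm_three_eq_zero {ι R : Type*}
    [CommRing R] (s : Finset ι) (f : ι → R) (h1 : (s.val.map f).esymm 1 = 0)
    (h3 : (s.val.map f).esymm 3 = 0) :
    ∑ i ∈ s, f i ^ 4 = 2 * (s.val.map f).esymm 2 ^ 2 - 4 * (s.val.map f).esymm 4 := by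
  have p2 := s.sum_pow_eq_mul_esymm_sub_sum f 2 two_pos
  have p4 := s.sum_pow_eq_mul_esymm_sub_sum f 4 four_pos
  rw [show (antidiagonal 2).filter (fun a : ℕ × ℕ => a.1 ∈ Set.Ioo 0 2) = {(1, 1)} by
    decide] at p2
  rw [show (antidiagonal 4).filter (fun a : ℕ × ℕ => a.1 ∈ Set.Ioo 0 4) =
    {(1, 3), (2, 2), (3, 1)} by decide] at p4
  norm_num [h1, h3] at p2 p4
  rw [p4, p2]
  ring

section Cayley

variable {K : Type*} [Field K] {ζ : K} {k : ℕ}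

def cayley (z : K) : K := (z - 1) / (z + 1)

theorem IsPrimitiveRoot.pow_add_one_ne_zero (hζ : IsPrimitiveRoot ζ k) (hk : Odd k)
    (h2 : (2 : K) ≠ 0) (j : ℕ) : ζ ^ j + 1 ≠ 0 := by
  intro h
  have h1 : (ζ ^ j) ^ k = 1 := by rw [← pow_mul, mul_comm, pow_mul, hζ.pow_eq_one, one_pow]
  rw [eq_neg_of_add_eq_zero_left h, hk.neg_one_pow] at h1
  exact h2 (by linear_combination -h1)

theorem IsPrimitiveRoot.prod_pow_add_one (hζ : IsPrimitiveRoot ζ k) (hk : Odd k) :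
    ∏ j ∈ range k, (ζ ^ j + 1) = 2 := by
  have h := hζ.pow_sub_pow_eq_prod_range_sub_mul hk.pos 1 (-1)
  simp only [hk.neg_one_pow, mul_neg, mul_one, sub_neg_eq_add, one_pow, one_add_one_eq_two] at h
  simpa only [add_comm] using h.symm

theorem IsPrimitiveRoot.C_two_mul_prod_X_sub_C_cayley (hζ : IsPrimitiveRoot ζ k) (hk : Odd k)
    (h2 : (2 : K) ≠ 0) :
    C 2 * ∏ j ∈ range k, (X - C (cayley (ζ ^ j))) = (X + 1) ^ k + (X - 1) ^ k := by
  have hfactor (j : ℕ) :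
      C (ζ ^ j + 1) * (X - C (cayley (ζ ^ j))) = (X + 1) - C ζ ^ j * (1 - X) := by
    rw [cayley, mul_sub, ← C_mul, mul_div_cancel₀ _ (hζ.pow_add_one_ne_zero hk h2 j)]
    simp only [map_add, map_sub, map_pow, map_one]
    ring
  have hC : IsPrimitiveRoot (C ζ) k := hζ.map_of_injective C_injective
  rw [← hζ.prod_pow_add_one hk, map_prod, ← prod_mul_distrib,
    prod_congr rfl fun j _ => hfactor j, ← hC.pow_sub_pow_eq_prod_range_sub_mul hk.pos,
    show (1 - X : K[X]) = -(X - 1) by ring, hk.neg_pow]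
  ring

theorem IsPrimitiveRoot.esymm_cayley (hζ : IsPrimitiveRoot ζ k) (hk : Odd k) (h2 : (2 : K) ≠ 0)
    (i : ℕ) :
    ((range k).val.map fun j => cayley (ζ ^ j)).esymm i =
      if Even i then (k.choose i : K) else 0 := by
  set s := (range k).val.map fun j => cayley (ζ ^ j)
  have hcard : Multiset.card s = k := by simp [s]
  rcases lt_or_ge k i with hki | hik
  · rw [Finset.esymm_map_val, powersetCard_eq_empty.mpr (by simpa using hki),
      Nat.choose_eq_zero_of_lt hki]
    simp
  have hvieta :
      (∏ j ∈ range k, (X - C (cayley (ζ ^ j)))).coeff (k - i) = (-1) ^ i * s.esymm i := by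
    simpa [s, Nat.sub_sub_self hik, Multiset.map_map, prod_eq_multiset_prod] using
      Multiset.prod_X_sub_C_coeff s (k := k - i) (by omega)
  have hcoeff := congrArg (coeff · (k - i)) (hζ.C_two_mul_prod_X_sub_C_cayley hk h2)
  rw [show (X + 1 : K[X]) = X + C 1 by simp,
    show (X - 1 : K[X]) = X + C (-1) by simp [sub_eq_add_neg]] at hcoeff
  simp only [coeff_C_mul, coeff_add, coeff_X_add_C_pow, one_pow, one_mul,
    Nat.sub_sub_self hik, Nat.choose_symm hik] at hcoeff
  rw [hvieta] at hcoeff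
  split_ifs with hi
  · rw [hi.neg_one_pow] at hcoeff
    exact mul_left_cancel₀ h2 (by linear_combination hcoeff)
  · rw [(Nat.not_even_iff_odd.mp hi).neg_one_pow] at hcoeff
    exact (mul_eq_zero.mp (by linear_combination -hcoeff : (2 : K) * s.esymm i = 0)).resolve_left h2

end Cayley

theorem Complex.tan_mul_I_eq (z : ℂ) :
    tan z * I = (exp (2 * z * I) - 1) / (exp (2 * z * I) + 1) := by
  have hE : exp (z * I) ≠ 0 := exp_ne_zero _
  have hsq : exp (2 * z * I) = exp (z * I) * exp (z * I) := by rw [← exp_add]; ring_nf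
  calc tan z * I = (exp (z * I) - exp (-z * I)) / (exp (z * I) + exp (-z * I)) := by
        rw [tan_eq_sin_div_cos, sin, cos, div_div_div_cancel_right₀ two_ne_zero,
          div_mul_eq_mul_div, mul_assoc, I_mul_I]
        ring
    _ = _ := by
        rw [hsq, neg_mul, exp_neg, ← mul_div_mul_left _ _ hE]
        field_simp

theorem cayley_exp_pow_eq_tan_mul_I (k j : ℕ) :
    cayley (Complex.exp (2 * π * Complex.I / k) ^ j) = Real.tan (π * j / k) * Complex.I := by
  rw [cayley, ← Complex.exp_nat_mul, Complex.ofReal_tan, Complex.tan_mul_I_eq]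
  push_cast
  ring_nf

theorem sum_tan_pow_four_general (k : ℕ) (hk : Odd k) :
    ∑ j ∈ Finset.range k, Real.tan (π * j / k) ^ 4 =
    (k : ℝ) * ((k : ℝ) - 1) * ((k : ℝ) ^ 2 + k - 3) / 3 := by
  have hζ := Complex.isPrimitiveRoot_exp k hk.pos.ne'
  have hesymm := hζ.esymm_cayley hk two_ne_zero
  apply Complex.ofReal_injective
  calc ((∑ j ∈ range k, Real.tan (π * j / k) ^ 4 : ℝ) : ℂ)
      = ∑ j ∈ range k, cayley (Complex.exp (2 * π * Complex.I / k) ^ j) ^ 4 := by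
        rw [Complex.ofReal_sum]
        refine sum_congr rfl fun j _ => ?_
        rw [cayley_exp_pow_eq_tan_mul_I, mul_pow, Complex.I_pow_four, mul_one, Complex.ofReal_pow]
    _ = 2 * (k.choose 2 : ℂ) ^ 2 - 4 * k.choose 4 := by
        rw [sum_pow_four_of_esymm_one_eq_zero_of_esymm_three_eq_zero _ _
          (by rw [hesymm, if_neg (by decide)]) (by rw [hesymm, if_neg (by decide)]),
          hesymm, hesymm, if_pos (by decide), if_pos (by decide)]
    _ = _ := by
        simp [Nat.cast_choose_eq_descPochhammer_div, descPochhammer_succ_eval, Nat.factorial]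
        ring

theorem sum_tan_pow_four (k : ℕ) (hk : Odd k) (hk0 : 0 < k) :
    ∑ j ∈ Finset.range k, Real.tan (π * j / k) ^ 4 =
    (k : ℝ) * ((k : ℝ) - 1) * ((k : ℝ) ^ 2 + k - 3) / 3 :=
  sum_tan_pow_four_general k hk
end

section
/- For positive integers a, b, k with 0 < ab < k, and any real x, the sum over j from 0 to k-1 of sin^(2a)(bπj/k + x) equals (k/4^a)·C(2a, a). -/
/-!
Expanding `sin θ = (e^{iθ} - e^{-iθ}) / 2i` by the binomial theorem writes `sin^(2a) θ` as
`4^(-a) ∑ₘ (-1)^(m+a) C(2a,m) e^{2i(a-m)θ}`. At the points `θ = bπj/k + x` the frequency `m`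
contributes a geometric sum in the `k`-th root of unity `e^{2πi(a-m)b/k}`, which differs from `1`
because `0 < |(a-m)b| ≤ ab < k` when `m ≠ a`; so only the constant term `m = a` survives,
once for each of the `k` points.
-/

open Finset Real

namespace Complex

theorem two_mul_I_mul_sin_pow (z : ℂ) (n : ℕ) :
    (2 * I * sin z) ^ n =
      ∑ m ∈ range (n + 1), (-1) ^ m * n.choose m * exp ((n - 2 * m) * z * I) := by
  have h : 2 * I * sin z = -exp (-z * I) + exp (z * I) := by
    rw [mul_assoc, mul_left_comm, two_sin]
    linear_combination (exp (-z * I) - exp (z * I)) * I_mul_I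
  rw [h, add_pow]
  refine sum_congr rfl fun m hm => ?_
  have hmn : m ≤ n := Nat.lt_succ_iff.mp (mem_range.mp hm)
  have hexp : exp (-z * I) ^ m * exp (z * I) ^ (n - m) = exp ((n - 2 * m) * z * I) := by
    rw [← exp_nat_mul, ← exp_nat_mul, ← exp_add]
    push_cast [hmn]
    ring_nf
  rw [neg_pow, ← hexp]
  ring

theorem sin_pow_two_mul (z : ℂ) (a : ℕ) :
    sin z ^ (2 * a) =
      ∑ m ∈ range (2 * a + 1), (-1) ^ (m + a) * (2 * a).choose m / 4 ^ a *
        exp ((2 * a - 2 * m) * z * I) := by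
  have hI : (2 * I) ^ (2 * a) = (-1) ^ a * 4 ^ a := by
    rw [pow_mul, mul_pow, I_sq, ← mul_pow]; norm_num
  have hsign : ((-1 : ℂ) ^ a) ^ 2 = 1 := by rw [← pow_mul, pow_mul', neg_one_sq, one_pow]
  have h := two_mul_I_mul_sin_pow z (2 * a)
  rw [mul_pow, hI] at h
  rw [← mul_right_inj' (by simp : (-1 : ℂ) ^ a * 4 ^ a ≠ 0), h, mul_sum]
  refine sum_congr rfl fun m _ => ?_
  push_cast
  field_simp
  linear_combination -(-1) ^ m * ((2 * a).choose m : ℂ) * hsign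

theorem sum_range_exp_two_pi_I_mul_div_add {k : ℕ} {n : ℤ} (h : ¬ (k : ℤ) ∣ n) (y : ℂ) :
    ∑ j ∈ range k, exp (2 * π * I * n * j / k + y) = 0 := by
  rcases eq_or_ne k 0 with rfl | hk
  · simp
  have hζ := isPrimitiveRoot_exp k hk
  have hr : exp (2 * π * I / k) ^ n ≠ 1 := mt (hζ.zpow_eq_one_iff_dvd n).mp h
  have hrk : (exp (2 * π * I / k) ^ n) ^ k = 1 := by
    rw [← zpow_natCast, ← zpow_mul, mul_comm n, zpow_mul, zpow_natCast, hζ.pow_eq_one, one_zpow]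
  calc ∑ j ∈ range k, exp (2 * π * I * n * j / k + y)
      = exp y * ∑ j ∈ range k, (exp (2 * π * I / k) ^ n) ^ j := by
        rw [mul_sum]
        refine sum_congr rfl fun j _ => ?_
        rw [← exp_int_mul, ← exp_nat_mul, ← exp_add]
        ring_nf
    _ = 0 := by rw [geom_sum_eq hr, hrk, sub_self, zero_div, mul_zero]

end Complex

theorem not_dvd_sub_mul_of_mul_lt {a b k m : ℕ} (hb : 0 < b) (hab : a * b < k) (hm : m ≤ 2 * a)
    (hma : m ≠ a) : ¬ (k : ℤ) ∣ ((a : ℤ) - m) * b := by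
  intro h
  have hlt : (((a : ℤ) - m) * b).natAbs < (k : ℤ).natAbs := by
    rw [Int.natAbs_mul, Int.natAbs_natCast, Int.natAbs_natCast]
    calc ((a : ℤ) - m).natAbs * b ≤ a * b := Nat.mul_le_mul_right b (by omega)
      _ < k := hab
  rcases mul_eq_zero.mp (Int.eq_zero_of_dvd_of_natAbs_lt_natAbs h hlt) with h0 | h0 <;> omega

theorem sum_sin_even_pow_general (a b k : ℕ) (hb : 0 < b) (hab : a * b < k) (x : ℝ) :
    ∑ j ∈ Finset.range k, Real.sin (b * π * j / k + x) ^ (2 * a) =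
    (k : ℝ) / 4 ^ a * Nat.choose (2 * a) a := by
  have hk : (k : ℂ) ≠ 0 := by norm_cast; omega
  apply Complex.ofReal_injective
  push_cast
  simp_rw [Complex.sin_pow_two_mul]
  rw [sum_comm, sum_eq_single_of_mem a (mem_range.mpr (by omega))]
  · simp only [← two_mul, pow_mul, neg_one_sq, one_pow, one_mul, sub_self, zero_mul,
      Complex.exp_zero, mul_one, sum_const, card_range, nsmul_eq_mul]
    ring
  · intro m hm hma
    have hm' : m ≤ 2 * a := Nat.lt_succ_iff.mp (mem_range.mp hm)
    have hexp : ∀ j : ℕ, (2 * a - 2 * m) * (b * π * j / k + x) * Complex.I =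
        2 * π * Complex.I * (((a : ℤ) - m) * b : ℤ) * j / k + (2 * a - 2 * m) * x * Complex.I := by
      intro j
      push_cast
      field_simp
    simp_rw [← mul_sum, hexp,
      Complex.sum_range_exp_two_pi_I_mul_div_add (not_dvd_sub_mul_of_mul_lt hb hab hm' hma),
      mul_zero]

theorem sum_sin_even_pow (a b k : ℕ) (ha : 0 < a) (hb : 0 < b) (hab : a * b < k) (x : ℝ) :
    ∑ j ∈ Finset.range k, Real.sin (b * π * j / k + x) ^ (2 * a) =
    (k : ℝ) / 4 ^ a * Nat.choose (2 * a) a :=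
  sum_sin_even_pow_general a b k hb hab x
end

section
/- For every positive integer a, the sum over m from 0 to a of (−1)^m · 4^(a−m) · C(2m, m) · C(a, m) equals C(2a, a). -/
/-!
Since `C(2m, m) (-1/4)^m = C(-1/2, m)`, dividing the sum by `4^a` turns it into the
Chu–Vandermonde sum `∑ C(-1/2, m) C(a, a - m) = C(a - 1/2, a)`, and by upper negation
`C(a - 1/2, a) = (-1)^a C(-1/2, a) = C(2a, a) / 4^a`.
-/

open Finset

namespace Ring

theorem succ_mul_choose_succ {R : Type*} [NonAssocRing R] [Pow R ℕ] [NatPowAssoc R]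
    [BinomialRing R] (r : R) (k : ℕ) :
    ((k : R) + 1) * choose r (k + 1) = choose r k * (r - k) := by
  have h := choose_smul_choose r (k.le_add_right 1)
  rw [Nat.choose_succ_self_right, Nat.add_sub_cancel_left, choose_one_right, nsmul_eq_mul] at h
  exact_mod_cast h

theorem sum_range_choose_mul_choose {R : Type*} [CommRing R] [BinomialRing R] (r : R) (n : ℕ) :
    ∑ k ∈ range (n + 1), choose r k * n.choose k = choose (r + n) n := by
  rw [add_choose_eq n (Commute.all r n),
    Nat.sum_antidiagonal_eq_sum_range_succ (fun i j => choose r i * choose (n : R) j)]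
  refine sum_congr rfl fun k hk => ?_
  rw [choose_natCast, Nat.choose_symm (mem_range_succ_iff.mp hk)]

theorem choose_neg_half {K : Type*} [Field K] [CharZero K] (n : ℕ) :
    choose (-2⁻¹ : K) n = (-4⁻¹) ^ n * n.centralBinom := by
  induction n with
  | zero => simp
  | succ n ih =>
    have hc : ((n : K) + 1) * (n + 1).centralBinom = 2 * (2 * n + 1) * n.centralBinom := by
      exact_mod_cast Nat.succ_mul_centralBinom_succ n
    apply mul_left_cancel₀ (Nat.cast_add_one_ne_zero n)
    rw [succ_mul_choose_succ, ih, pow_succ]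
    linear_combination (-4⁻¹ : K) ^ n * 4⁻¹ * hc

theorem sum_range_choose_neg_half_mul_choose {K : Type*} [Field K] [CharZero K] (n : ℕ) :
    ∑ k ∈ range (n + 1), choose (-2⁻¹ : K) k * n.choose k = 4⁻¹ ^ n * n.centralBinom := by
  have hneg : (-2⁻¹ : K) + n = -(2⁻¹ - n) := by ring
  have hhalf : (2⁻¹ : K) - n + n - 1 = -2⁻¹ := by ring
  rw [sum_range_choose_mul_choose, hneg, choose_neg, hhalf, choose_neg_half, Units.smul_def,
    Int.coe_negOnePow_natCast, zsmul_eq_mul]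
  push_cast
  rw [← mul_assoc, ← mul_pow]
  norm_num

end Ring

theorem binom_alt_sum_general (a : ℕ) :
    ∑ m ∈ Finset.range (a + 1),
      ((-1 : ℤ) ^ m * 4 ^ (a - m) * Nat.choose (2 * m) m * Nat.choose a m) =
    Nat.choose (2 * a) a := by
  have hterm : ∀ m ∈ range (a + 1),
      (-1 : ℚ) ^ m * 4 ^ (a - m) * (2 * m).choose m * a.choose m =
        4 ^ a * (Ring.choose (-2⁻¹ : ℚ) m * a.choose m) := by
    intro m hm
    rw [Ring.choose_neg_half, Nat.centralBinom_eq_two_mul_choose,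
      ← pow_sub_mul_pow 4 (mem_range_succ_iff.mp hm),
      show (-4⁻¹ : ℚ) = -1 * 4⁻¹ by norm_num, mul_pow, inv_pow]
    field_simp
  rw [← Nat.centralBinom_eq_two_mul_choose]
  qify
  rw [sum_congr rfl hterm, ← mul_sum, Ring.sum_range_choose_neg_half_mul_choose, ← mul_assoc,
    ← mul_pow]
  norm_num

theorem binom_alt_sum (a : ℕ) (ha : 0 < a) :
    ∑ m ∈ Finset.range (a + 1),
      ((-1 : ℤ) ^ m * 4 ^ (a - m) * Nat.choose (2 * m) m * Nat.choose a m) =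
    Nat.choose (2 * a) a :=
  binom_alt_sum_general a
end
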